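/- For n ≥ 2 define the n-qubit linear cluster state Lin_n : (Fin n → Fin 2) → ℂ by Lin_n(x) = 2^{-n/2}·(-1)^{∑_{i=0}^{n-2} x_i x_{i+1}}. Fix any qubit index j ∈ Fin n. Then the reduced single-qubit density matrix of Lin_n at qubit j is maximally mixed: the 2×2 matrix ρ with entries ρ(s,t) = ∑_{y} Lin_n(y with j-th entry s) · conj(Lin_n(y with j-th entry t)), where y ranges over assignments to the remaining n-1 qubits, equals (1/2)·I. -/

import Mathlib

/-! Cluster-state amplitudes are real of modulus `2^{-n/2}`, so every term of `ρ(s,t)` is `2^{-n}`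
times a sign. Setting qubit `j` to `s` changes only the two bonds at `j`, which raises the exponent
by `s·(y_{j-1} + y_{j+1})`. Hence `ρ(s,s) = 2^{-n}·2^{n-1} = 1/2`, while for `s ≠ t` the sum of
`(-1)^{y_{j-1} + y_{j+1}}` over `y` factors into a product over qubits in which a neighbour of `j`
contributes `1 + (-1) = 0`. -/

noncomputable def Lin (n : ℕ) (x : Fin n → Fin 2) : ℂ :=
  (((Real.sqrt 2)⁻¹ ^ n : ℝ) : ℂ) *
    (-1 : ℂ) ^ (∑ i : Fin (n - 1),
      ((x ⟨i.1, by have := i.isLt; omega⟩ : Fin 2) : ℕ) *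
      ((x ⟨i.1 + 1, by have := i.isLt; omega⟩ : Fin 2) : ℕ))

def insAt (n : ℕ) (j : Fin n) (s : Fin 2) (y : Fin (n - 1) → Fin 2) : Fin n → Fin 2 :=
  fun i =>
    if _ : i.1 < j.1 then y ⟨i.1, by have := j.isLt; omega⟩
    else if _ : i.1 = j.1 then s
    else y ⟨i.1 - 1, by have := i.isLt; omega⟩

theorem sum_neg_one_pow_sum_eq_zero {ι R : Type*} [Fintype ι] [DecidableEq ι] [CommRing R]
    {S : Finset ι} (hS : S.Nonempty) :
    ∑ y : ι → Fin 2, (-1 : R) ^ ∑ i ∈ S, (y i : ℕ) = 0 := by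
  obtain ⟨k, hk⟩ := hS
  calc ∑ y : ι → Fin 2, (-1 : R) ^ ∑ i ∈ S, (y i : ℕ)
      = ∑ y : ι → Fin 2, ∏ i, if i ∈ S then (-1 : R) ^ (y i : ℕ) else 1 := by
        simp only [Fintype.prod_ite_mem, Finset.prod_pow_eq_pow_sum]
    _ = ∏ i, ∑ b : Fin 2, if i ∈ S then (-1 : R) ^ (b : ℕ) else 1 :=
        (Fintype.prod_sum fun i (b : Fin 2) => if i ∈ S then (-1 : R) ^ (b : ℕ) else 1).symm
    _ = 0 := Finset.prod_eq_zero (Finset.mem_univ k) (by simp [hk])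

namespace LinearCluster

variable {n : ℕ}

def bond (x : Fin n → Fin 2) (i : Fin (n - 1)) : ℕ :=
  ((x ⟨i.1, by omega⟩ : Fin 2) : ℕ) * ((x ⟨i.1 + 1, by omega⟩ : Fin 2) : ℕ)

theorem Lin_eq (x : Fin n → Fin 2) :
    Lin n x = (((Real.sqrt 2)⁻¹ ^ n : ℝ) : ℂ) * (-1 : ℂ) ^ ∑ i, bond x i := rfl

-- The indices of `y` that `insAt n j` places next to qubit `j`, at positions `j - 1` and `j + 1`.
def neighbors (j : Fin n) : Finset (Fin (n - 1)) :=
  {i | i.1 + 1 = j.1 ∨ i.1 = j.1}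

theorem mem_neighbors {j : Fin n} {i : Fin (n - 1)} :
    i ∈ neighbors j ↔ i.1 + 1 = j.1 ∨ i.1 = j.1 := by
  simp [neighbors]

theorem neighbors_nonempty (hn : 2 ≤ n) (j : Fin n) : (neighbors j).Nonempty := by
  by_cases hj : j.1 = 0
  · exact ⟨⟨0, by omega⟩, mem_neighbors.mpr (Or.inr hj.symm)⟩
  · exact ⟨⟨j.1 - 1, by omega⟩,
      mem_neighbors.mpr (Or.inl (Nat.sub_add_cancel (Nat.one_le_iff_ne_zero.mpr hj)))⟩

section insAt

variable (j : Fin n) (s : Fin 2) (y : Fin (n - 1) → Fin 2)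

theorem insAt_of_lt {i : Fin n} (h : i.1 < j.1) :
    insAt n j s y i = y ⟨i.1, by omega⟩ := by
  simp [insAt, h]

theorem insAt_of_eq {i : Fin n} (h : i.1 = j.1) : insAt n j s y i = s := by
  simp [insAt, h]

theorem insAt_of_gt {i : Fin n} (h : j.1 < i.1) :
    insAt n j s y i = y ⟨i.1 - 1, by omega⟩ := by
  simp [insAt, show ¬ i.1 < j.1 by omega, show i.1 ≠ j.1 by omega]

theorem bond_insAt (i : Fin (n - 1)) :
    bond (insAt n j s y) i
      = bond (insAt n j 0 y) i + (s : ℕ) * if i ∈ neighbors j then (y i : ℕ) else 0 := by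
  have hi := i.isLt
  unfold bond
  rcases lt_trichotomy (i.1 + 1) j.1 with h | h | h
  · rw [insAt_of_lt j s y (by simp; omega), insAt_of_lt j s y (by simpa using h),
      insAt_of_lt j 0 y (by simp; omega), insAt_of_lt j 0 y (by simpa using h),
      if_neg (by rw [mem_neighbors]; omega), mul_zero, add_zero]
  · rw [insAt_of_lt j s y (by simp; omega), insAt_of_eq j s y (by simpa using h),
      insAt_of_lt j 0 y (by simp; omega), insAt_of_eq j 0 y (by simpa using h),
      if_pos (mem_neighbors.mpr (Or.inl h))]
    simp [mul_comm]
  rcases eq_or_lt_of_le (Nat.le_of_lt_succ h) with h | h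
  · rw [insAt_of_eq j s y (by simpa using h.symm), insAt_of_gt j s y (by simp; omega),
      insAt_of_eq j 0 y (by simpa using h.symm), insAt_of_gt j 0 y (by simp; omega),
      if_pos (mem_neighbors.mpr (Or.inr h.symm))]
    simp
  · rw [insAt_of_gt j s y (by simpa using h), insAt_of_gt j s y (by simp; omega),
      insAt_of_gt j 0 y (by simpa using h), insAt_of_gt j 0 y (by simp; omega),
      if_neg (by rw [mem_neighbors]; omega), mul_zero, add_zero]

theorem sum_bond_insAt :
    ∑ i, bond (insAt n j s y) i
      = ∑ i, bond (insAt n j 0 y) i + (s : ℕ) * ∑ i ∈ neighbors j, (y i : ℕ) := by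
  rw [Finset.sum_congr rfl fun i _ => bond_insAt j s y i, Finset.sum_add_distrib,
    ← Finset.mul_sum, Finset.sum_ite_mem, Finset.univ_inter]

end insAt

theorem conj_Lin (x : Fin n → Fin 2) : starRingEnd ℂ (Lin n x) = Lin n x := by
  rw [Lin_eq, map_mul, map_pow, map_neg, map_one, Complex.conj_ofReal]

theorem Lin_insAt_mul_conj (j : Fin n) (s t : Fin 2) (y : Fin (n - 1) → Fin 2) :
    Lin n (insAt n j s y) * starRingEnd ℂ (Lin n (insAt n j t y))
      = (2⁻¹ : ℂ) ^ n * (-1) ^ (((s : ℕ) + t) * ∑ i ∈ neighbors j, (y i : ℕ)) := by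
  rw [conj_Lin, Lin_eq, Lin_eq, sum_bond_insAt, sum_bond_insAt (s := t)]
  calc _ = (((Real.sqrt 2)⁻¹ ^ n * (Real.sqrt 2)⁻¹ ^ n : ℝ) : ℂ) *
        (-1) ^ (2 * ∑ i, bond (insAt n j 0 y) i
          + ((s : ℕ) + t) * ∑ i ∈ neighbors j, (y i : ℕ)) := by
        push_cast; ring
    _ = _ := by
        rw [← mul_pow, ← mul_inv, Real.mul_self_sqrt zero_le_two, pow_add, pow_mul, neg_one_sq,
          one_pow, one_mul]
        push_cast; rfl

end LinearCluster

open LinearCluster in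
/-- For `n ≥ 2` and any qubit `j`, the reduced single-qubit density
matrix of the `n`-qubit linear cluster state at qubit `j`, with entries
`ρ(s,t) = ∑_y Lin_n(y with j-th entry s)·conj(Lin_n(y with j-th entry t))`,
is maximally mixed: `ρ = (1/2)·I`. -/
theorem stmt_15 (n : ℕ) (hn : 2 ≤ n) (j : Fin n) :
    (Matrix.of fun s t : Fin 2 =>
        ∑ y : Fin (n - 1) → Fin 2,
          Lin n (insAt n j s y) * (starRingEnd ℂ) (Lin n (insAt n j t y)))
      = (1 / 2 : ℂ) • (1 : Matrix (Fin 2) (Fin 2) ℂ) := by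
  ext s t
  simp only [Matrix.of_apply, Matrix.smul_apply, Matrix.one_apply, smul_eq_mul,
    Lin_insAt_mul_conj, ← Finset.mul_sum]
  obtain rfl | hst := eq_or_ne s t
  · obtain ⟨m, rfl⟩ := Nat.exists_eq_add_one.mpr j.pos
    simp only [Even.neg_one_pow ((Even.add_self _).mul_right _), Finset.sum_const, Finset.card_univ,
      Fintype.card_fun, Fintype.card_fin, Nat.add_sub_cancel, nsmul_eq_mul, Nat.cast_pow,
      Nat.cast_ofNat, mul_one, if_pos]
    rw [pow_succ, inv_pow]
    field_simp
  · have hst' : (s : ℕ) + t = 1 := by omega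
    simp only [hst', one_mul, sum_neg_one_pow_sum_eq_zero (neighbors_nonempty hn j), mul_zero,
      if_neg hst]
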